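/- Let Y be a square-integrable random vector in R^N with mean μ_Y and covariance matrix Σ_Y, and let φ_1, …, φ_N be an orthonormal basis of eigenvectors of Σ_Y with eigenvalues λ_1 ≥ ⋯ ≥ λ_N ≥ 0. For 1 ≤ N′ ≤ N, among all orthonormal families ψ_1, …, ψ_{N′} in R^N, the expected squared reconstruction error E[‖(Y − μ_Y) − Σ_{i=1}^{N′} ⟨ψ_i, Y − μ_Y⟩ ψ_i‖²] is minimized by taking ψ_i = φ_i, i.e. projecting onto the span of the N′ leading eigenvectors; the minimum value is Σ_{i=N′+1}^{N} λ_i. -/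

import Mathlib

open MeasureTheory Matrix
open scoped RealInnerProductSpace

/-!
Write `Z = Y - μY`. By Pythagoras the error of an orthonormal family `ψ` is
`E‖Z‖² - ∑ₖ E⟪ψₖ, Z⟫²`, and `E⟪u, Z⟫² = ⟪u, S u⟫ = ∑ⱼ λⱼ ⟪φⱼ, u⟫²`. Hence `E‖Z‖² = ∑ⱼ λⱼ`
and `∑ₖ E⟪ψₖ, Z⟫² = ∑ⱼ λⱼ tⱼ` with weights `tⱼ = ∑ₖ ⟪φⱼ, ψₖ⟫²` in `[0, 1]` (Bessel) summing to
`N'` (Parseval). Such a weighted sum is largest when all the weight sits on the `N'` largest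
eigenvalues, which is what `ψ = φ ∘ Fin.castLE` achieves.
-/

theorem sum_mul_le_sum_of_threshold {ι : Type*} [Fintype ι] (s : Finset ι) (lam t : ι → ℝ)
    (c : ℝ) (hs : ∀ j ∈ s, c ≤ lam j) (hsc : ∀ j ∉ s, lam j ≤ c)
    (ht0 : ∀ j, 0 ≤ t j) (ht1 : ∀ j, t j ≤ 1) (ht : ∑ j, t j = s.card) :
    ∑ j, lam j * t j ≤ ∑ j ∈ s, lam j := by
  classical
  have hterm : ∀ j, (lam j - c) * (t j - if j ∈ s then 1 else 0) ≤ 0 := by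
    intro j
    by_cases hj : j ∈ s
    · simpa [hj] using
        mul_nonpos_of_nonneg_of_nonpos (sub_nonneg.2 (hs j hj)) (sub_nonpos.2 (ht1 j))
    · simpa [hj] using mul_nonpos_of_nonpos_of_nonneg (sub_nonpos.2 (hsc j hj)) (ht0 j)
  have hsum : ∑ j, (lam j - c) * (t j - if j ∈ s then 1 else 0) =
      ∑ j, lam j * t j - ∑ j ∈ s, lam j - c * (∑ j, t j - s.card) := by
    simp only [mul_sub, sub_mul, Finset.sum_sub_distrib, mul_ite, mul_one, mul_zero,
      Finset.sum_ite_mem, Finset.univ_inter, ← Finset.mul_sum, Finset.sum_const, nsmul_eq_mul]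
    ring
  have := Finset.sum_nonpos fun j (_ : j ∈ Finset.univ) => hterm j
  rw [hsum, ht, sub_self, mul_zero] at this
  linarith

section InnerProductSpace

variable {ι κ E : Type*} [Fintype ι] [Fintype κ] [NormedAddCommGroup E] [InnerProductSpace ℝ E]

theorem Orthonormal.norm_sub_sum_inner_smul_sq {ψ : κ → E} (hψ : Orthonormal ℝ ψ) (x : E) :
    ‖x - ∑ k, ⟪ψ k, x⟫ • ψ k‖ ^ 2 = ‖x‖ ^ 2 - ∑ k, ⟪ψ k, x⟫ ^ 2 := by
  have hproj : ‖∑ k, ⟪ψ k, x⟫ • ψ k‖ ^ 2 = ∑ k, ⟪ψ k, x⟫ ^ 2 := by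
    rw [← real_inner_self_eq_norm_sq, hψ.inner_sum]
    simp [sq]
  have hcross : ⟪x, ∑ k, ⟪ψ k, x⟫ • ψ k⟫ = ∑ k, ⟪ψ k, x⟫ ^ 2 := by
    simp only [inner_sum, real_inner_smul_right, real_inner_comm x, sq]
  rw [norm_sub_sq_real, hproj, hcross]
  ring

theorem OrthonormalBasis.inner_self_map_eq_sum_mul_inner_sq (b : OrthonormalBasis ι ℝ E)
    (lam : ι → ℝ) {T : E →ₗ[ℝ] E} (hT : ∀ i, T (b i) = lam i • b i) (u : E) :
    ⟪u, T u⟫ = ∑ i, lam i * ⟪b i, u⟫ ^ 2 := by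
  calc ⟪u, T u⟫ = ⟪u, T (∑ i, ⟪b i, u⟫ • b i)⟫ := by rw [b.sum_repr']
    _ = ∑ i, lam i * ⟪b i, u⟫ ^ 2 := by
      simp only [map_sum, map_smul, hT, inner_sum, inner_smul_right, real_inner_comm u]
      exact Finset.sum_congr rfl fun i _ => by ring

theorem OrthonormalBasis.sum_mul_sum_inner_sq_le (b : OrthonormalBasis ι ℝ E) {ψ : κ → E}
    (hψ : Orthonormal ℝ ψ) (lam : ι → ℝ) (s : Finset ι) (hs : s.card = Fintype.card κ) (c : ℝ)
    (hlam_s : ∀ j ∈ s, c ≤ lam j) (hlam_sc : ∀ j ∉ s, lam j ≤ c) :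
    ∑ j, lam j * ∑ k, ⟪b j, ψ k⟫ ^ 2 ≤ ∑ j ∈ s, lam j := by
  refine sum_mul_le_sum_of_threshold s lam _ c hlam_s hlam_sc (fun j => by positivity)
    (fun j => ?_) ?_
  · calc ∑ k, ⟪b j, ψ k⟫ ^ 2 = ∑ k, ‖⟪ψ k, b j⟫‖ ^ 2 := by simp [real_inner_comm]
      _ ≤ ‖b j‖ ^ 2 := hψ.sum_inner_products_le (b j)
      _ = 1 := by simp [b.orthonormal.1 j]
  · rw [Finset.sum_comm, hs]
    simp [b.sum_sq_inner_right, hψ.1]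

end InnerProductSpace

section SecondMoment

variable {Ω ι : Type*} [MeasurableSpace Ω] {P : Measure Ω} [Fintype ι] [DecidableEq ι]
  {Z : Ω → EuclideanSpace ℝ ι}

theorem integral_inner_sq_eq_inner_toLpLin (hZ : MemLp Z 2 P) {S : Matrix ι ι ℝ}
    (hS : ∀ j k, S j k = ∫ ω, Z ω j * Z ω k ∂P) (u : EuclideanSpace ℝ ι) :
    ∫ ω, ⟪u, Z ω⟫ ^ 2 ∂P = ⟪u, toLpLin 2 2 S u⟫ := by
  have hcoord : ∀ j, MemLp (fun ω => Z ω j) 2 P := fun j => by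
    simpa [EuclideanSpace.inner_single_left] using
      hZ.const_inner (𝕜 := ℝ) (EuclideanSpace.single j (1 : ℝ))
  have hprod : ∀ j k, Integrable (fun ω => u j * u k * (Z ω j * Z ω k)) P := fun j k =>
    ((hcoord j).integrable_mul (hcoord k)).const_mul _
  have hexpand : ∀ ω, ⟪u, Z ω⟫ ^ 2 = ∑ j, ∑ k, u j * u k * (Z ω j * Z ω k) := fun ω => by
    simp only [PiLp.inner_apply, RCLike.inner_apply, conj_trivial, sq, Finset.sum_mul_sum]
    exact Finset.sum_congr rfl fun j _ => Finset.sum_congr rfl fun k _ => by ring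
  simp_rw [hexpand]
  rw [integral_finsetSum _ fun j _ => integrable_finsetSum _ fun k _ => hprod j k]
  simp_rw [integral_finsetSum _ fun k _ => hprod _ k, integral_const_mul, ← hS]
  simp only [PiLp.inner_apply, RCLike.inner_apply, conj_trivial, ofLp_toLpLin, toLin'_apply,
    mulVec, dotProduct, Finset.sum_mul]
  exact Finset.sum_congr rfl fun j _ => Finset.sum_congr rfl fun k _ => by ring

theorem integral_inner_sq_eq_sum_mul_inner_sq (hZ : MemLp Z 2 P) {S : Matrix ι ι ℝ}
    (hS : ∀ j k, S j k = ∫ ω, Z ω j * Z ω k ∂P) (φ : OrthonormalBasis ι ℝ (EuclideanSpace ℝ ι))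
    {lam : ι → ℝ} (hφ : ∀ i, toLpLin 2 2 S (φ i) = lam i • φ i) (u : EuclideanSpace ℝ ι) :
    ∫ ω, ⟪u, Z ω⟫ ^ 2 ∂P = ∑ i, lam i * ⟪φ i, u⟫ ^ 2 := by
  rw [integral_inner_sq_eq_inner_toLpLin hZ hS, φ.inner_self_map_eq_sum_mul_inner_sq lam hφ]

theorem integral_inner_basis_sq (hZ : MemLp Z 2 P) {S : Matrix ι ι ℝ}
    (hS : ∀ j k, S j k = ∫ ω, Z ω j * Z ω k ∂P) (φ : OrthonormalBasis ι ℝ (EuclideanSpace ℝ ι))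
    {lam : ι → ℝ} (hφ : ∀ i, toLpLin 2 2 S (φ i) = lam i • φ i) (m : ι) :
    ∫ ω, ⟪φ m, Z ω⟫ ^ 2 ∂P = lam m := by
  simp [integral_inner_sq_eq_sum_mul_inner_sq hZ hS φ hφ, φ.inner_eq_ite]

theorem integral_norm_sq_eq_sum (hZ : MemLp Z 2 P) {S : Matrix ι ι ℝ}
    (hS : ∀ j k, S j k = ∫ ω, Z ω j * Z ω k ∂P) (φ : OrthonormalBasis ι ℝ (EuclideanSpace ℝ ι))
    {lam : ι → ℝ} (hφ : ∀ i, toLpLin 2 2 S (φ i) = lam i • φ i) :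
    ∫ ω, ‖Z ω‖ ^ 2 ∂P = ∑ i, lam i := by
  simp_rw [← φ.sum_sq_inner_right]
  rw [integral_finsetSum _ fun i _ => (hZ.const_inner (φ i)).integrable_sq]
  exact Finset.sum_congr rfl fun i _ => integral_inner_basis_sq hZ hS φ hφ i

end SecondMoment

theorem integral_norm_sub_sum_inner_smul_sq {Ω κ E : Type*} [MeasurableSpace Ω] {P : Measure Ω}
    [Fintype κ] [NormedAddCommGroup E] [InnerProductSpace ℝ E] {Z : Ω → E} (hZ : MemLp Z 2 P)
    {ψ : κ → E} (hψ : Orthonormal ℝ ψ) :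
    ∫ ω, ‖Z ω - ∑ k, ⟪ψ k, Z ω⟫ • ψ k‖ ^ 2 ∂P =
      ∫ ω, ‖Z ω‖ ^ 2 ∂P - ∑ k, ∫ ω, ⟪ψ k, Z ω⟫ ^ 2 ∂P := by
  have hsq : ∀ k, Integrable (fun ω => ⟪ψ k, Z ω⟫ ^ 2) P := fun k =>
    (hZ.const_inner (ψ k)).integrable_sq
  simp_rw [hψ.norm_sub_sum_inner_smul_sq]
  rw [integral_sub hZ.norm.integrable_sq (integrable_finsetSum _ fun k _ => hsq k),
    integral_finsetSum _ fun k _ => hsq k]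

theorem pca_projection_minimizes_reconstruction_error_general
    {Ω : Type*} [MeasurableSpace Ω] (P : Measure Ω) [IsProbabilityMeasure P]
    {N : ℕ} (Y : Ω → EuclideanSpace ℝ (Fin N))
    (hY2 : MemLp Y 2 P)
    (μY : EuclideanSpace ℝ (Fin N))
    (S : Matrix (Fin N) (Fin N) ℝ)
    (hS : ∀ i j, S i j = ∫ ω, (Y ω i - μY i) * (Y ω j - μY j) ∂P)
    (φ : OrthonormalBasis (Fin N) ℝ (EuclideanSpace ℝ (Fin N))) (lam : Fin N → ℝ)
    (hmono : ∀ i j : Fin N, i ≤ j → lam j ≤ lam i)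
    (heig : ∀ i j, S.mulVec (φ i) j = lam i * φ i j)
    (N' : ℕ) (hN'1 : 1 ≤ N') (hN'N : N' ≤ N) :
    (∀ ψ : Fin N' → EuclideanSpace ℝ (Fin N), Orthonormal ℝ ψ →
      (∫ ω, ‖(Y ω - μY) -
          ∑ i : Fin N', ⟪φ (Fin.castLE hN'N i), Y ω - μY⟫ • φ (Fin.castLE hN'N i)‖ ^ 2 ∂P) ≤
      ∫ ω, ‖(Y ω - μY) - ∑ i : Fin N', ⟪ψ i, Y ω - μY⟫ • ψ i‖ ^ 2 ∂P) ∧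
    (∫ ω, ‖(Y ω - μY) -
        ∑ i : Fin N', ⟪φ (Fin.castLE hN'N i), Y ω - μY⟫ • φ (Fin.castLE hN'N i)‖ ^ 2 ∂P) =
      ∑ i ∈ Finset.univ.filter (fun i : Fin N => N' ≤ (i : ℕ)), lam i := by
  have hZ : MemLp (fun ω => Y ω - μY) 2 P := hY2.sub (memLp_const μY)
  have hS' : ∀ j k, S j k = ∫ ω, (Y ω - μY) j * (Y ω - μY) k ∂P := by simpa using hS
  have hφ : ∀ i, toLpLin 2 2 S (φ i) = lam i • φ i := fun i => by
    ext j
    simpa using heig i j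
  set s := Finset.univ.map (Fin.castLEEmb hN'N)
  have hmem : ∀ j, j ∈ s ↔ (j : ℕ) < N' := fun j => by
    simp only [s, Finset.mem_map, Finset.mem_univ, true_and]
    exact ⟨by rintro ⟨a, rfl⟩; exact a.isLt, fun h => ⟨⟨j, h⟩, rfl⟩⟩
  have herr_lead := integral_norm_sub_sum_inner_smul_sq hZ
    (φ.orthonormal.comp _ (Fin.castLE_injective hN'N))
  simp only [integral_norm_sq_eq_sum hZ hS' φ hφ, Function.comp_apply,
    integral_inner_basis_sq hZ hS' φ hφ] at herr_lead
  rw [show ∑ k : Fin N', lam (Fin.castLE hN'N k) = ∑ j ∈ s, lam j by simp [s]] at herr_lead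
  refine ⟨fun ψ hψ => ?_, ?_⟩
  · rw [herr_lead, integral_norm_sub_sum_inner_smul_sq hZ hψ, integral_norm_sq_eq_sum hZ hS' φ hφ]
    gcongr
    simp_rw [integral_inner_sq_eq_sum_mul_inner_sq hZ hS' φ hφ]
    rw [Finset.sum_comm]
    simp_rw [← Finset.mul_sum]
    refine φ.sum_mul_sum_inner_sq_le hψ lam s (by simp [s]) (lam ⟨N' - 1, by omega⟩)
      (fun j hj => hmono _ _ (show (j : ℕ) ≤ N' - 1 by have := (hmem j).1 hj; omega))
      (fun j hj => hmono _ _ (show N' - 1 ≤ (j : ℕ) by have := (hmem j).not.1 hj; omega))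
  · have hcompl : Finset.univ.filter (fun i : Fin N => N' ≤ (i : ℕ)) = sᶜ := by
      ext j
      simp [hmem]
    rw [herr_lead, hcompl, ← Finset.sum_compl_add_sum s lam]
    ring

/-- Among all orthonormal families `ψ₁, …, ψ_{N'}` in `ℝ^N`, the expected
squared reconstruction error `E[‖(Y − μY) − ∑_{i≤N'} ⟪ψ_i, Y − μY⟫ ψ_i‖²]` is minimized by
the `N'` leading eigenvectors `φ₁, …, φ_{N'}` of the covariance matrix, and the minimum
value is the sum of the discarded eigenvalues `∑_{i>N'} λ_i`. -/
theorem pca_projection_minimizes_reconstruction_error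
    {Ω : Type*} [MeasurableSpace Ω] (P : Measure Ω) [IsProbabilityMeasure P]
    {N : ℕ} (Y : Ω → EuclideanSpace ℝ (Fin N))
    (hYmeas : Measurable Y) (hY2 : MemLp Y 2 P)
    (μY : EuclideanSpace ℝ (Fin N)) (hμ : ∀ i, μY i = ∫ ω, Y ω i ∂P)
    (S : Matrix (Fin N) (Fin N) ℝ)
    (hS : ∀ i j, S i j = ∫ ω, (Y ω i - μY i) * (Y ω j - μY j) ∂P)
    (φ : OrthonormalBasis (Fin N) ℝ (EuclideanSpace ℝ (Fin N))) (lam : Fin N → ℝ)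
    (hmono : ∀ i j : Fin N, i ≤ j → lam j ≤ lam i) (hnonneg : ∀ i, 0 ≤ lam i)
    (heig : ∀ i j, S.mulVec (φ i) j = lam i * φ i j)
    (N' : ℕ) (hN'1 : 1 ≤ N') (hN'N : N' ≤ N) :
    (∀ ψ : Fin N' → EuclideanSpace ℝ (Fin N), Orthonormal ℝ ψ →
      (∫ ω, ‖(Y ω - μY) -
          ∑ i : Fin N', ⟪φ (Fin.castLE hN'N i), Y ω - μY⟫ • φ (Fin.castLE hN'N i)‖ ^ 2 ∂P) ≤
      ∫ ω, ‖(Y ω - μY) - ∑ i : Fin N', ⟪ψ i, Y ω - μY⟫ • ψ i‖ ^ 2 ∂P) ∧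
    (∫ ω, ‖(Y ω - μY) -
        ∑ i : Fin N', ⟪φ (Fin.castLE hN'N i), Y ω - μY⟫ • φ (Fin.castLE hN'N i)‖ ^ 2 ∂P) =
      ∑ i ∈ Finset.univ.filter (fun i : Fin N => N' ≤ (i : ℕ)), lam i :=
  pca_projection_minimizes_reconstruction_error_general P Y hY2 μY S hS φ lam hmono heig N' hN'1
    hN'N
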